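/- For every natural number n, the total number of right-to-left partial Łukasiewicz paths of length n (ending at any height k ≥ 0) equals the (n+1)-st Catalan number catalan (n+1). -/

import Mathlib

/-!
Let `N(n, k)` be the number of paths of length `n` ending at height `k`. Splitting off the last
step gives `N(n+1, k) = ∑_{j ≥ k-1} N(n, j)`, and the hockey-stick identity shows that the ballot
numbers `N(n, k) = C(2n-k, n) - C(2n-k, n+1)` solve this recursion. The recursion at `k = 1` says
that the total `∑_k N(n, k)` is `N(n+1, 1) = C(2n+1, n+1) - C(2n+1, n+2)`, i.e. `catalan (n + 1)`.
-/

/-- A right-to-left partial Łukasiewicz path of length `n` (ending at any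
height `k ≥ 0`): a list of `n` integer steps, each `≤ 1`, with all partial
sums `≥ 0`. -/
def IsRLPartial (w : List ℤ) (n : ℕ) : Prop :=
  w.length = n ∧ (∀ x ∈ w, x ≤ 1) ∧ (∀ i, 0 ≤ (w.take i).sum)

open Finset

theorem List.forall_take_iff_forall_prefix {α : Type*} {l : List α} {p : List α → Prop} :
    (∀ i, p (l.take i)) ↔ ∀ u, u <+: l → p u :=
  ⟨fun h _ hu => List.prefix_iff_eq_take.1 hu ▸ h _, fun h i => h _ (l.take_prefix i)⟩

namespace IsRLPartial

theorem zero_iff {w : List ℤ} : IsRLPartial w 0 ↔ w = [] :=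
  ⟨fun h => List.length_eq_zero_iff.1 h.1, fun h => h ▸ ⟨rfl, by simp, by simp⟩⟩

theorem iff_forall_prefix {w : List ℤ} {n : ℕ} :
    IsRLPartial w n ↔ w.length = n ∧ (∀ x ∈ w, x ≤ 1) ∧ ∀ u, u <+: w → 0 ≤ u.sum := by
  rw [IsRLPartial, List.forall_take_iff_forall_prefix (p := fun u => 0 ≤ u.sum)]

theorem append_singleton_iff {v : List ℤ} {x : ℤ} {n : ℕ} :
    IsRLPartial (v ++ [x]) (n + 1) ↔ IsRLPartial v n ∧ x ≤ 1 ∧ 0 ≤ v.sum + x := by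
  simp only [iff_forall_prefix, List.prefix_concat_iff, or_imp, forall_and, forall_eq,
    List.length_append, List.length_singleton, List.forall_mem_append, List.forall_mem_singleton,
    List.sum_append, List.sum_singleton, add_left_inj]
  tauto

theorem sum_mem_Icc {w : List ℤ} {n : ℕ} (h : IsRLPartial w n) : w.sum ∈ Set.Icc 0 (n : ℤ) := by
  obtain ⟨hlen, hle, hpre⟩ := h
  refine ⟨by simpa using hpre w.length, ?_⟩
  simpa [hlen] using List.sum_le_card_nsmul w 1 hle

end IsRLPartial

def pathsEndingAt : ℕ → ℕ → Finset (List ℤ)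
  | 0, k => if k = 0 then {[]} else ∅
  | n + 1, k => (Icc (k - 1) n).biUnion fun j => (pathsEndingAt n j).image (· ++ [(k - j : ℤ)])

theorem mem_pathsEndingAt {n k : ℕ} {w : List ℤ} :
    w ∈ pathsEndingAt n k ↔ IsRLPartial w n ∧ w.sum = k := by
  induction n generalizing k w with
  | zero =>
    rw [IsRLPartial.zero_iff]
    rcases eq_or_ne k 0 with rfl | hk <;> simp +contextual [pathsEndingAt, *, eq_comm]
  | succ n ih =>
    simp only [pathsEndingAt, mem_biUnion, mem_Icc, mem_image, ih]
    constructor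
    · rintro ⟨j, ⟨hkj, -⟩, v, ⟨hv, hvj⟩, rfl⟩
      exact ⟨IsRLPartial.append_singleton_iff.2 ⟨hv, by omega, by omega⟩, by simp [hvj]⟩
    · rintro ⟨hw, hwk⟩
      obtain ⟨v, x, rfl⟩ := (List.eq_nil_or_concat' w).resolve_left fun h => by
        simpa [h] using hw.1
      obtain ⟨hv, hx, hvx⟩ := IsRLPartial.append_singleton_iff.1 hw
      obtain ⟨hv0, hvn⟩ := hv.sum_mem_Icc
      simp only [List.sum_append, List.sum_singleton] at hwk
      exact ⟨v.sum.toNat, ⟨by omega, by omega⟩, v, ⟨hv, by omega⟩, by congr; omega⟩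

theorem pairwiseDisjoint_pathsEndingAt (n : ℕ) (s : Set ℕ) :
    s.PairwiseDisjoint (pathsEndingAt n) := by
  intro j _ j' _ hjj'
  refine Finset.disjoint_left.2 fun w hw hw' => hjj' ?_
  exact_mod_cast (mem_pathsEndingAt.1 hw).2.symm.trans (mem_pathsEndingAt.1 hw').2

theorem card_pathsEndingAt_succ (n k : ℕ) :
    #(pathsEndingAt (n + 1) k) = ∑ j ∈ Icc (k - 1) n, #(pathsEndingAt n j) := by
  rw [pathsEndingAt, card_biUnion]
  · exact sum_congr rfl fun j _ => card_image_of_injective _ (List.append_left_injective _)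
  · intro j _ j' _ hjj'
    simp only [Function.onFun, disjoint_left, mem_image, not_exists, not_and]
    rintro _ ⟨v, -, rfl⟩ v' - h
    have := List.singleton_inj.1 (List.append_inj_right' h rfl)
    omega

theorem Nat.sum_Icc_choose_of_le {m r : ℕ} (M : ℕ) (h : m ≤ r) :
    ∑ i ∈ Icc m M, i.choose r = (M + 1).choose (r + 1) := by
  rw [← Nat.sum_Icc_choose M r]
  refine (sum_subset (Icc_subset_Icc_left h) fun i hi hir => ?_).symm
  rw [Nat.choose_eq_zero_of_lt]
  simp only [mem_Icc] at hi hir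
  omega

theorem Nat.sum_Icc_choose_two_mul_sub {n k r : ℕ} (hk : k ≤ n) (hr : n ≤ r) :
    ∑ j ∈ Icc k n, (2 * n - j).choose r = (2 * n - k + 1).choose (r + 1) := by
  rw [← Nat.sum_Icc_choose_of_le _ hr]
  refine sum_nbij' (2 * n - ·) (2 * n - ·) ?_ ?_ ?_ ?_ fun _ _ => rfl <;>
    intro i hi <;> simp only [mem_Icc] at hi ⊢ <;> omega

theorem catalan_succ_add_choose (n : ℕ) :
    catalan (n + 1) + (2 * n + 1).choose (n + 2) = (2 * n + 1).choose (n + 1) := by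
  have hcat : (n + 2) * catalan (n + 1) = 2 * (2 * n + 1).choose (n + 1) := by
    rw [succ_mul_catalan_eq_centralBinom, Nat.centralBinom,
      show 2 * (n + 1) = 2 * n + 1 + 1 by ring, Nat.choose_succ_succ, ← Nat.choose_symm_half]
    ring
  have hchoose : (2 * n + 1).choose (n + 2) * (n + 2) = (2 * n + 1).choose (n + 1) * n := by
    rw [Nat.choose_succ_right_eq, show 2 * n + 1 - (n + 1) = n by omega]
  refine Nat.eq_of_mul_eq_mul_left (show 0 < n + 2 by omega) ?_
  linarith

theorem card_pathsEndingAt_succ_zero (n : ℕ) :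
    #(pathsEndingAt (n + 1) 0) = #(pathsEndingAt (n + 1) 1) := by
  rw [card_pathsEndingAt_succ, card_pathsEndingAt_succ]

-- `N(n, k) = C(2n-k, n) - C(2n-k, n+1)`, stated without truncated subtraction.
theorem card_pathsEndingAt_add_choose {n k : ℕ} (hk : k ≤ n) :
    #(pathsEndingAt n k) + (2 * n - k).choose (n + 1) = (2 * n - k).choose n := by
  induction n generalizing k with
  | zero => simp [Nat.le_zero.1 hk, pathsEndingAt]
  | succ n ih =>
    have hsucc : ∀ i ≤ n, #(pathsEndingAt (n + 1) (i + 1)) + (2 * n - i + 1).choose (n + 1 + 1)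
        = (2 * n - i + 1).choose (n + 1) := fun i hi => by
      have hsum := sum_congr rfl fun j (hj : j ∈ Icc i n) => ih (mem_Icc.1 hj).2
      rw [sum_add_distrib, Nat.sum_Icc_choose_two_mul_sub hi (Nat.le_succ n),
        Nat.sum_Icc_choose_two_mul_sub hi le_rfl] at hsum
      rwa [card_pathsEndingAt_succ, Nat.add_sub_cancel]
    rcases k with _ | k
    -- `N(n+1, 0) = N(n+1, 1)`, and Pascal's rule carries the formula from `2n+1` to `2n+2`.
    · have h0 := hsucc 0 (Nat.zero_le n)
      rw [card_pathsEndingAt_succ_zero, show 2 * (n + 1) - 0 = 2 * n + 1 + 1 by omega,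
        Nat.choose_succ_succ (2 * n + 1) (n + 1), Nat.choose_succ_succ (2 * n + 1) n,
        ← Nat.choose_symm_half]
      simp only [Nat.sub_zero, zero_add, Nat.succ_eq_add_one] at h0 ⊢
      omega
    · rw [show 2 * (n + 1) - (k + 1) = 2 * n - k + 1 by omega]
      exact hsucc k (by omega)

theorem card_pathsEndingAt_succ_one (n : ℕ) : #(pathsEndingAt (n + 1) 1) = catalan (n + 1) := by
  have hballot := card_pathsEndingAt_add_choose (show 1 ≤ n + 1 by omega)
  rw [show 2 * (n + 1) - 1 = 2 * n + 1 by omega] at hballot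
  linarith [catalan_succ_add_choose n]

theorem rlPartialLuk_total_count (n : ℕ) :
    Nat.card {w : List ℤ // IsRLPartial w n} = catalan (n + 1) := by
  have hmem (w : List ℤ) : w ∈ (Icc 0 n).biUnion (pathsEndingAt n) ↔ IsRLPartial w n := by
    simp only [mem_biUnion, mem_Icc, mem_pathsEndingAt]
    refine ⟨fun ⟨_, _, hw, _⟩ => hw, fun hw => ?_⟩
    obtain ⟨h0, hn⟩ := hw.sum_mem_Icc
    exact ⟨w.sum.toNat, ⟨Nat.zero_le _, by omega⟩, hw, by omega⟩
  calc Nat.card {w : List ℤ // IsRLPartial w n}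
      = #((Icc 0 n).biUnion (pathsEndingAt n)) := Nat.subtype_card _ hmem
    _ = #(pathsEndingAt (n + 1) 1) := by
      rw [card_biUnion (pairwiseDisjoint_pathsEndingAt n _), card_pathsEndingAt_succ]
    _ = catalan (n + 1) := card_pathsEndingAt_succ_one n
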